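/- For a random variable Y with E|Y| < ∞, the map τ ↦ μ_τ(Y) from (0,1) to ℝ is continuous. -/

import Mathlib

open MeasureTheory Filter Set Asymptotics

noncomputable def ident (τ x y : ℝ) : ℝ :=
  if x ≤ y then τ * (y - x) else -((1 - τ) * (x - y))

noncomputable def score (τ x y : ℝ) : ℝ :=
  τ / 2 * ((max (y - x) 0) ^ 2 - (max y 0) ^ 2) +
    (1 - τ) / 2 * ((max (x - y) 0) ^ 2 - (max (-y) 0) ^ 2)

/-!
The identification function `ident τ x y` is piecewise linear in `x`, with slopes `-τ` and
`-(1 - τ)`, so `x ↦ E[ident τ x Y]` decreases at rate at least `min τ (1 - τ)`; and it is affine in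
`τ`, with `E[ident τ x Y] - E[ident σ x Y] = (τ - σ) E|Y - x|`. If `x` is the `τ`-expectile and
`x₀` the `σ`-expectile, comparing `E[ident τ · Y]` at `x` and `x₀` therefore gives
`min τ (1 - τ) |x - x₀| ≤ |τ - σ| E|Y - x₀|`, which forces `x → x₀` as `τ → σ`.
-/

lemma ident_eq_posPart_sub_negPart (τ x y : ℝ) :
    ident τ x y = τ * (y - x)⁺ - (1 - τ) * (y - x)⁻ := by
  rw [posPart_def, negPart_def, neg_sub, ident]
  split_ifs with h
  · rw [max_eq_left (by linarith), max_eq_right (by linarith)]; ring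
  · rw [max_eq_right (by linarith), max_eq_left (by linarith)]; ring

lemma ident_sub_ident_eq_mul_abs (τ σ x y : ℝ) : ident τ x y - ident σ x y = (τ - σ) * |y - x| := by
  rw [ident_eq_posPart_sub_negPart, ident_eq_posPart_sub_negPart, ← posPart_add_negPart]
  ring

lemma min_mul_sub_le_ident_sub_ident {x x' : ℝ} (h : x ≤ x') (τ y : ℝ) :
    min τ (1 - τ) * (x' - x) ≤ ident τ x y - ident τ x' y := by
  have hτ := min_le_left τ (1 - τ)
  have hτ' := min_le_right τ (1 - τ)
  unfold ident
  split_ifs <;> nlinarith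

section Integral

variable {Ω : Type*} [MeasurableSpace Ω] {P : Measure Ω} {Y : Ω → ℝ}

lemma integrable_ident [IsFiniteMeasure P] (hY : Integrable Y P) (τ x : ℝ) :
    Integrable (fun ω ↦ ident τ x (Y ω)) P := by
  simp_rw [ident_eq_posPart_sub_negPart]
  have hYx := hY.sub (integrable_const x)
  exact (hYx.pos_part.const_mul τ).sub (hYx.neg_part.const_mul (1 - τ))

lemma integral_ident_sub_integral_ident_eq_mul [IsFiniteMeasure P] (hY : Integrable Y P)
    (τ σ x : ℝ) :
    ∫ ω, ident τ x (Y ω) ∂P - ∫ ω, ident σ x (Y ω) ∂P = (τ - σ) * ∫ ω, |Y ω - x| ∂P := by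
  rw [← integral_sub (integrable_ident hY τ x) (integrable_ident hY σ x), ← integral_const_mul]
  simp_rw [ident_sub_ident_eq_mul_abs]

lemma min_mul_sub_le_integral_ident_sub [IsProbabilityMeasure P] (hY : Integrable Y P)
    {x x' : ℝ} (h : x ≤ x') (τ : ℝ) :
    min τ (1 - τ) * (x' - x) ≤ ∫ ω, ident τ x (Y ω) ∂P - ∫ ω, ident τ x' (Y ω) ∂P := by
  rw [← integral_sub (integrable_ident hY τ x) (integrable_ident hY τ x')]
  calc min τ (1 - τ) * (x' - x) = ∫ _, min τ (1 - τ) * (x' - x) ∂P := by simp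
    _ ≤ _ := integral_mono (integrable_const _)
        ((integrable_ident hY τ x).sub (integrable_ident hY τ x'))
        fun ω ↦ min_mul_sub_le_ident_sub_ident h τ (Y ω)

lemma min_mul_abs_sub_le_abs_integral_ident_sub [IsProbabilityMeasure P] (hY : Integrable Y P)
    (τ x x₀ : ℝ) :
    min τ (1 - τ) * |x - x₀| ≤ |∫ ω, ident τ x (Y ω) ∂P - ∫ ω, ident τ x₀ (Y ω) ∂P| := by
  rcases le_total x x₀ with h | h
  · rw [abs_of_nonpos (sub_nonpos.2 h), neg_sub]
    exact (min_mul_sub_le_integral_ident_sub hY h τ).trans (le_abs_self _)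
  · rw [abs_of_nonneg (sub_nonneg.2 h), abs_sub_comm]
    exact (min_mul_sub_le_integral_ident_sub hY h τ).trans (le_abs_self _)

lemma min_mul_abs_sub_le_of_integral_ident_eq_zero [IsProbabilityMeasure P]
    (hY : Integrable Y P) {τ σ x x₀ : ℝ} (hx : ∫ ω, ident τ x (Y ω) ∂P = 0)
    (hx₀ : ∫ ω, ident σ x₀ (Y ω) ∂P = 0) :
    min τ (1 - τ) * |x - x₀| ≤ |τ - σ| * ∫ ω, |Y ω - x₀| ∂P := by
  have hτx₀ : ∫ ω, ident τ x₀ (Y ω) ∂P = (τ - σ) * ∫ ω, |Y ω - x₀| ∂P := by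
    rw [← integral_ident_sub_integral_ident_eq_mul hY, hx₀, sub_zero]
  calc min τ (1 - τ) * |x - x₀|
      ≤ |∫ ω, ident τ x (Y ω) ∂P - ∫ ω, ident τ x₀ (Y ω) ∂P| :=
        min_mul_abs_sub_le_abs_integral_ident_sub hY τ x x₀
    _ = |τ - σ| * ∫ ω, |Y ω - x₀| ∂P := by
        rw [hx, hτx₀, zero_sub, abs_neg, abs_mul,
          abs_of_nonneg (integral_nonneg fun ω ↦ abs_nonneg _)]

end Integral

theorem expectile_continuous_in_tau
    {Ω : Type*} [MeasurableSpace Ω] (P : Measure Ω) [IsProbabilityMeasure P]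
    (Y : Ω → ℝ) (hY : Integrable Y P)
    (μ : ℝ → ℝ) (hμ : ∀ τ ∈ Set.Ioo (0:ℝ) 1, ∫ ω, ident τ (μ τ) (Y ω) ∂P = 0) :
    ContinuousOn μ (Set.Ioo (0:ℝ) 1) := by
  intro τ₀ hτ₀
  set K := ∫ ω, |Y ω - μ τ₀| ∂P
  have hmin_pos : ∀ τ ∈ Ioo (0 : ℝ) 1, 0 < min τ (1 - τ) :=
    fun τ hτ ↦ lt_min hτ.1 (sub_pos.2 hτ.2)
  have hdist : ∀ τ ∈ Ioo (0 : ℝ) 1, dist (μ τ) (μ τ₀) ≤ |τ - τ₀| * K / min τ (1 - τ) := by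
    intro τ hτ
    rw [Real.dist_eq, le_div_iff₀ (hmin_pos τ hτ), mul_comm]
    exact min_mul_abs_sub_le_of_integral_ident_eq_zero hY (hμ τ hτ) (hμ τ₀ hτ₀)
  have hbound : Tendsto (fun τ ↦ |τ - τ₀| * K / min τ (1 - τ)) (nhds τ₀) (nhds 0) := by
    have hcont : ContinuousAt (fun τ ↦ |τ - τ₀| * K / min τ (1 - τ)) τ₀ :=
      ContinuousAt.div (by fun_prop) (by fun_prop) (hmin_pos τ₀ hτ₀).ne'
    simpa using hcont.tendsto
  exact tendsto_iff_dist_tendsto_zero.2 <| squeeze_zero' (Eventually.of_forall fun _ ↦ dist_nonneg)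
    (eventually_nhdsWithin_of_forall hdist) (hbound.mono_left nhdsWithin_le_nhds)
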